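/- arXiv:1211.6009 — 6 statements merged into one kernel-verified Lean document; each statement's English description precedes it below -/
import Mathlib

section
/- Let F₂ be the free group on two generators with word metric d. For all x, y, v, w ∈ F₂ and r ∈ ℕ: if v belongs to the flower Fl_x(y,r) (i.e. d(v,y) = r and d(v,x) = r + d(y,x)) and d(x,w) ≤ d(x,y), then d(v,w) = r + d(y,w). In particular, any two elements of the flower Fl_x(y,r) are equidistant from every point w of the closed ball of radius d(x,y) around x. -/
/-!
Translate `y` to the identity and look at the Cayley tree of the free group. There
`|a⁻¹c| = |a| + |c|` can only fail when the reduced words of `a` and `c` start with the same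
letter. Since `1` lies on the geodesic from `a = y⁻¹v` to `b = y⁻¹x`, the word of `b` does not
start with that letter, so `b⁻¹c` has no cancellation and `|b⁻¹c| = |b| + |c|`; with
`|b⁻¹c| ≤ |b|` this forces `c = 1`, whose word is empty.
-/

/-- The left-invariant word metric on the free group on two generators:
`d g h` is the length of the reduced word representing `g⁻¹ * h`. -/
def wordDist (g h : FreeGroup (Fin 2)) : ℕ := FreeGroup.norm (g⁻¹ * h)

/-- The flower `Fl_x(y,r)`: the set of points at distance `r` from `y` whose geodesic to `x`
passes through `y`. -/
def flower (x y : FreeGroup (Fin 2)) (r : ℕ) : Set (FreeGroup (Fin 2)) :=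
  {v | wordDist v y = r ∧ wordDist v x = r + wordDist y x}

namespace FreeGroup

variable {α : Type*} [DecidableEq α]

theorem isReduced_invRev_toWord (g : FreeGroup α) : IsReduced (invRev g.toWord) :=
  toWord_inv g ▸ isReduced_toWord

theorem norm_inv_mul_of_head?_disjoint {g h : FreeGroup α}
    (hgh : ∀ p ∈ g.toWord.head?, p ∉ h.toWord.head?) :
    norm (g⁻¹ * h) = norm g + norm h := by
  have hjoin : ∀ a ∈ (invRev g.toWord).getLast?, ∀ b ∈ h.toWord.head?,
      a.1 = b.1 → a.2 = b.2 := by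
    intro a ha b hb hab
    rw [invRev, List.getLast?_reverse, List.head?_map] at ha
    obtain ⟨p, hp, rfl⟩ := Option.mem_map.1 ha
    have hpb : p.2 ≠ b.2 := fun h2 => hgh p hp (Prod.ext (x := p) hab h2 ▸ hb)
    exact (Bool.eq_not.2 hpb.symm).symm
  have hred : IsReduced (invRev g.toWord ++ h.toWord) :=
    List.isChain_append.2 ⟨isReduced_invRev_toWord g, isReduced_toWord, hjoin⟩
  rw [norm, toWord_mul, toWord_inv, hred.reduce_eq, List.length_append, invRev_length]
  rfl

theorem norm_inv_mul_add_two_le_of_mem_head? {g h : FreeGroup α} {p : α × Bool}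
    (hg : p ∈ g.toWord.head?) (hh : p ∈ h.toWord.head?) :
    norm (g⁻¹ * h) + 2 ≤ norm g + norm h := by
  obtain ⟨tg, hg⟩ := List.head?_eq_some_iff.1 hg
  obtain ⟨th, hh⟩ := List.head?_eq_some_iff.1 hh
  have hcancel : g⁻¹ * h = (mk tg)⁻¹ * mk th := by
    rw [← mk_toWord (x := g), ← mk_toWord (x := h), hg, hh,
      ← List.singleton_append, ← List.singleton_append (l := th), ← mul_mk, ← mul_mk]
    group
  calc norm (g⁻¹ * h) + 2 ≤ norm (mk tg)⁻¹ + norm (mk th) + 2 := by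
        rw [hcancel]; gcongr; exact norm_mul_le _ _
    _ ≤ tg.length + th.length + 2 := by
        rw [norm_inv_eq]; gcongr <;> exact norm_mk_le
    _ = norm g + norm h := by
        simp only [norm, hg, hh, List.length_cons]; ring

theorem norm_inv_mul_eq_add_of_norm_inv_mul_le {a b c : FreeGroup α}
    (hab : norm (a⁻¹ * b) = norm a + norm b) (hbc : norm (b⁻¹ * c) ≤ norm b) :
    norm (a⁻¹ * c) = norm a + norm c := by
  refine norm_inv_mul_of_head?_disjoint fun p hpa hpc => ?_
  have hpb : p ∉ b.toWord.head? := fun hpb => by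
    have := norm_inv_mul_add_two_le_of_mem_head? hpa hpb
    omega
  have hbc' := norm_inv_mul_of_head?_disjoint (g := b) (h := c) fun q hqb hqc => by
    obtain rfl : q = p := Option.some_injective _ ((Option.mem_def.1 hqc).symm.trans hpc)
    exact hpb hqb
  have hc : c = 1 := norm_eq_zero.1 (by omega)
  simp [hc] at hpc

end FreeGroup

theorem wordDist_comm (g h : FreeGroup (Fin 2)) : wordDist g h = wordDist h g := by
  rw [wordDist, wordDist, ← FreeGroup.norm_inv_eq, mul_inv_rev, inv_inv]

/-- **Points of a flower are equidistant from points of the ball.**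
If `v ∈ Fl_x(y,r)` and `d(x,w) ≤ d(x,y)` then `d(v,w) = r + d(y,w)`; in particular any two
elements of the flower are equidistant from every point `w` of the closed ball of radius
`d(x,y)` around `x`. -/
theorem flower_equidistant (x y v w : FreeGroup (Fin 2)) (r : ℕ)
    (hv : v ∈ flower x y r) (hw : wordDist x w ≤ wordDist x y) :
    wordDist v w = r + wordDist y w := by
  obtain ⟨hvy, hvx⟩ := hv
  have key := FreeGroup.norm_inv_mul_eq_add_of_norm_inv_mul_le
    (a := y⁻¹ * v) (b := y⁻¹ * x) (c := y⁻¹ * w)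
  simp only [mul_inv_rev, inv_inv, mul_assoc, mul_inv_cancel_left] at key
  change wordDist v x = wordDist y v + wordDist y x → wordDist x w ≤ wordDist y x →
    wordDist v w = wordDist y v + wordDist y w at key
  rw [wordDist_comm y v, hvy] at key
  exact key hvx (hw.trans_eq (wordDist_comm x y))
end

section
/- Let F₂ be the free group on two generators with word metric d. Let x₀, x₀', y ∈ F₂ satisfy d(x₀,y) + d(y,x₀') > d(x₀,x₀') (that is, y does not lie on the geodesic from x₀ to x₀'). Then for every r ∈ ℕ the flowers with respect to the two base points coincide: Fl_{x₀}(y,r) = Fl_{x₀'}(y,r). -/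
namespace FreeGroup

variable {α : Type*} [DecidableEq α]

theorem norm_mul_eq_add_iff_isReduced (x y : FreeGroup α) :
    norm (x * y) = norm x + norm y ↔ IsReduced (x.toWord ++ y.toWord) := by
  constructor
  · intro h
    have hlen : (x * y).toWord.length = (x.toWord ++ y.toWord).length := by
      rw [List.length_append]; exact h
    rw [← (toWord_mul_sublist x y).eq_of_length hlen]
    exact isReduced_toWord
  · intro h
    simp only [norm, toWord_mul, h.reduce_eq, List.length_append]

theorem norm_mul_eq_add_iff (x y : FreeGroup α) :
    norm (x * y) = norm x + norm y ↔
      ∀ a ∈ x.toWord.getLast?, ∀ b ∈ y.toWord.head?, a.1 = b.1 → a.2 = b.2 := by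
  rw [norm_mul_eq_add_iff_isReduced, IsReduced, List.isChain_append]
  exact ⟨fun h ↦ h.2.2, fun h ↦ ⟨isReduced_toWord, isReduced_toWord, h⟩⟩

theorem getLast?_toWord_inv (x : FreeGroup α) :
    x⁻¹.toWord.getLast? = x.toWord.head?.map fun a ↦ (a.1, !a.2) := by
  rw [toWord_inv, invRev, List.getLast?_reverse, List.head?_map]

theorem head?_toWord_eq_of_norm_inv_mul_lt {x y : FreeGroup α}
    (h : norm (x⁻¹ * y) < norm x + norm y) : x.toWord.head? = y.toWord.head? := by
  have hcancel : ¬norm (x⁻¹ * y) = norm x⁻¹ + norm y := norm_inv_eq (x := x) ▸ h.ne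
  simp only [norm_mul_eq_add_iff, getLast?_toWord_inv, Option.mem_map, not_forall] at hcancel
  obtain ⟨_, ⟨a, ha, rfl⟩, b, hb, h₁, h₂⟩ := hcancel
  rw [ha, hb, Option.some_inj]
  exact Prod.ext h₁ (by simpa using h₂)

theorem norm_mul_eq_add_iff_of_head?_eq (w : FreeGroup α) {x y : FreeGroup α}
    (h : x.toWord.head? = y.toWord.head?) :
    norm (w * x) = norm w + norm x ↔ norm (w * y) = norm w + norm y := by
  rw [norm_mul_eq_add_iff, norm_mul_eq_add_iff, h]

end FreeGroup

open FreeGroup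

theorem wordDist_eq_add_iff_of_lt_add {x x' y : FreeGroup (Fin 2)}
    (h : wordDist x x' < wordDist x y + wordDist y x') (v : FreeGroup (Fin 2)) :
    wordDist v x = wordDist v y + wordDist y x ↔
      wordDist v x' = wordDist v y + wordDist y x' := by
  have hhead : (y⁻¹ * x).toWord.head? = (y⁻¹ * x').toWord.head? := by
    apply head?_toWord_eq_of_norm_inv_mul_lt
    simpa [wordDist, ← norm_inv_eq (x := x⁻¹ * y), mul_assoc] using h
  simpa [wordDist, mul_assoc] using norm_mul_eq_add_iff_of_head?_eq (v⁻¹ * y) hhead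

/-- **Base change for flowers off the geodesic.**
If `y` does not lie on the geodesic from `x₀` to `x₀'`, then for every `r` the flowers
based at `y` with respect to the two base points coincide: `Fl_{x₀}(y,r) = Fl_{x₀'}(y,r)`. -/
theorem flower_base_change_off_geodesic (x₀ x₀' y : FreeGroup (Fin 2))
    (hy : wordDist x₀ x₀' < wordDist x₀ y + wordDist y x₀') (r : ℕ) :
    flower x₀ y r = flower x₀' y r := by
  ext v
  refine and_congr_right fun hr ↦ ?_
  rw [← hr]
  exact wordDist_eq_add_iff_of_lt_add hy v
end

section
/- Let F₂ be the free group on two generators with word metric d. Let x₀, x₀', y ∈ F₂ satisfy d(x₀,y) + d(y,x₀') = d(x₀,x₀') (y lies on the geodesic from x₀ to x₀') and let r ≥ 1. Then there exists a finite family of pairs (y_j, r_j), j ∈ J, with |J| ≤ 4·(d(x₀,x₀') + 1), such that the flowers Fl_{x₀}(y_j, r_j) are pairwise disjoint, their union equals Fl_{x₀'}(y, r), and for every j one has d(x₀,y_j) + r_j ≥ d(x₀',y) + r − d(x₀,x₀'). -/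
open List

section BranchPrefix

variable {α : Type*} [DecidableEq α]

def branchPrefix : List α → List α → List α
  | [], _ => []
  | a :: _, [] => [a]
  | a :: V, b :: G => if a = b then a :: branchPrefix V G else [a]

theorem branchPrefix_prefix (V G : List α) : branchPrefix V G <+: V := by
  fun_induction branchPrefix V G <;> simp_all

theorem dropLast_branchPrefix_prefix (V G : List α) : (branchPrefix V G).dropLast <+: G := by
  fun_induction branchPrefix V G with
  | case3 V b G ih =>
    rcases eq_or_ne (branchPrefix V G) [] with h | h
    · simp [h]
    · simpa [dropLast_cons_of_ne_nil h] using ih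
  | _ => simp

theorem branchPrefix_eq_or_not_prefix (V G : List α) :
    branchPrefix V G = V ∨ ¬ branchPrefix V G <+: G := by
  fun_induction branchPrefix V G <;> simp_all

theorem branchPrefix_eq_of_prefix {V W G : List α} (h : branchPrefix V G <+: W)
    (hlen : W.length = V.length) : branchPrefix W G = branchPrefix V G := by
  induction V, G using branchPrefix.induct generalizing W <;> cases W <;> simp_all [branchPrefix]

theorem head?_eq_of_branchPrefix_eq {V W G : List α} (h : branchPrefix W G = branchPrefix V G)
    (hlen : W.length = V.length) : W.head? = V.head? := by
  cases V <;> cases W <;> cases G <;> simp_all [branchPrefix]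
  split_ifs at h <;> simp_all

theorem branchPrefix_ne_nil {V : List α} (G : List α) (hV : V ≠ []) : branchPrefix V G ≠ [] := by
  cases V <;> cases G <;> simp_all [branchPrefix]
  split <;> simp

end BranchPrefix

namespace FreeGroup

variable {α : Type*} {L L₁ L₂ : List (α × Bool)}

theorem fst_eq_imp_snd_eq_iff_ne (a b : α × Bool) : (a.1 = b.1 → a.2 = b.2) ↔ b ≠ (a.1, !a.2) := by
  obtain ⟨a, x⟩ := a
  obtain ⟨b, y⟩ := b
  cases x <;> cases y <;> simp [eq_comm]

theorem isReduced_append_iff : IsReduced (L₁ ++ L₂) ↔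
    IsReduced L₁ ∧ IsReduced L₂ ∧ ∀ a ∈ L₁.getLast?, ∀ b ∈ L₂.head?, b ≠ (a.1, !a.2) := by
  simp only [IsReduced, isChain_append, fst_eq_imp_snd_eq_iff_ne]

variable [DecidableEq α]

theorem IsReduced.invRev (h : IsReduced L) : IsReduced (invRev L) := by
  rw [isReduced_iff_reduce_eq, reduce_invRev, h.reduce_eq]

theorem IsReduced.toWord_mk (h : IsReduced L) : (mk L).toWord = L := by
  rw [FreeGroup.toWord_mk, h.reduce_eq]

theorem IsReduced.norm_mk (h : IsReduced L) : (mk L).norm = L.length := by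
  rw [FreeGroup.norm, h.toWord_mk]

theorem eq_mk_singleton_mul {u : FreeGroup α} {a : α × Bool} {U : List (α × Bool)}
    (hU : u.toWord = a :: U) : u = mk [a] * mk U := by
  rw [mul_mk, singleton_append, ← hU, mk_toWord]

theorem norm_inv_mul_eq_add_iff (u e : FreeGroup α) :
    (u⁻¹ * e).norm = u.norm + e.norm ↔
      ∀ a ∈ u.toWord.head?, ∀ b ∈ e.toWord.head?, a ≠ b := by
  constructor
  · rintro h a ha _ hb rfl
    obtain ⟨U, hU⟩ := head?_eq_some_iff.1 ha
    obtain ⟨E, hE⟩ := head?_eq_some_iff.1 hb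
    have hcancel : u⁻¹ * e = (mk U)⁻¹ * mk E := by
      rw [eq_mk_singleton_mul hU, eq_mk_singleton_mul hE]
      group
    have hle : (u⁻¹ * e).norm ≤ U.length + E.length := by
      rw [hcancel]
      exact (norm_mul_le _ _).trans (by rw [norm_inv_eq]; exact add_le_add norm_mk_le norm_mk_le)
    simp only [FreeGroup.norm, hU, hE, length_cons] at h hle
    omega
  · intro h
    have hred : IsReduced (invRev u.toWord ++ e.toWord) := by
      refine isReduced_append_iff.2 ⟨isReduced_toWord.invRev, isReduced_toWord, ?_⟩
      simp only [FreeGroup.invRev, getLast?_reverse, head?_map, Option.mem_map]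
      rintro _ ⟨a, ha, rfl⟩ b hb
      simpa using (h a ha b hb).symm
    have hmk : u⁻¹ * e = mk (invRev u.toWord ++ e.toWord) := by
      rw [← mul_mk, ← inv_mk, mk_toWord, mk_toWord]
    rw [hmk, hred.norm_mk, length_append, invRev_length]
    rfl

end FreeGroup

open FreeGroup

local notation "F₂" => FreeGroup (Fin 2)

theorem wordDist_comm_s8 (a b : F₂) : wordDist a b = wordDist b a := by
  rw [wordDist, wordDist, ← norm_inv_eq, mul_inv_rev, inv_inv]

theorem wordDist_triangle (a b c : F₂) : wordDist a c ≤ wordDist a b + wordDist b c := by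
  simpa [wordDist, mul_assoc] using norm_mul_le (a⁻¹ * b) (b⁻¹ * c)

theorem wordDist_mul_left (c a b : F₂) : wordDist (c * a) (c * b) = wordDist a b := by
  simp [wordDist, mul_assoc]

theorem mem_flower_mul_left_iff (c x z w : F₂) (t : ℕ) :
    c * w ∈ flower (c * x) (c * z) t ↔ w ∈ flower x z t := by
  simp only [flower, Set.mem_ofPred_eq, wordDist_mul_left]

theorem flower_zero (x y : F₂) : flower x y 0 = {y} := by
  ext v
  constructor
  · rintro ⟨h, -⟩
    exact inv_mul_eq_one.1 (FreeGroup.norm_eq_zero.1 h)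
  · rintro rfl
    simp [flower, wordDist]

theorem mem_flower_iff {x z w : F₂} {t : ℕ} :
    w ∈ flower x z t ↔ (z⁻¹ * w).norm = t ∧
      ∀ a ∈ (z⁻¹ * w).toWord.head?, ∀ b ∈ (z⁻¹ * x).toWord.head?, a ≠ b := by
  have hwz : wordDist w z = (z⁻¹ * w).norm := by rw [wordDist_comm_s8]; rfl
  have hwx : wordDist w x = ((z⁻¹ * w)⁻¹ * (z⁻¹ * x)).norm := by simp [wordDist, mul_assoc]
  simp only [flower, Set.mem_ofPred_eq, hwz, hwx, ← norm_inv_mul_eq_add_iff]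
  exact and_congr_right fun h => by rw [h]; rfl

theorem le_wordDist_add_of_mem_flower {x x' y z v : F₂} {r t : ℕ} (hv : v ∈ flower x z t)
    (hv' : v ∈ flower x' y r) : wordDist x' y + r ≤ wordDist x z + t + wordDist x x' := by
  have := wordDist_triangle v x x'
  rw [hv'.2, hv.2] at this
  rw [wordDist_comm_s8 x' y, wordDist_comm_s8 x z]
  omega

/-- When the geodesic from `z` to `x` starts along the last edge of `z`, the flower `Fl_x(z,t)`
consists of the descendants of `z` at depth `t`. -/
theorem mem_flower_iff_prefix {x z w : F₂} {t : ℕ} {P : List (Fin 2 × Bool)} {s : Fin 2 × Bool}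
    (hz : z.toWord = P ++ [s]) (hx : (z⁻¹ * x).toWord.head? = some (s.1, !s.2)) :
    w ∈ flower x z t ↔ w.norm = z.norm + t ∧ z.toWord <+: w.toWord := by
  have hjunction : ∀ U : List (Fin 2 × Bool),
      (∀ b ∈ z.toWord.getLast?, ∀ a ∈ U.head?, a ≠ (b.1, !b.2)) ↔
        ∀ a ∈ U.head?, ∀ b ∈ (z⁻¹ * x).toWord.head?, a ≠ b := by
    simp [hz, hx]
  rw [mem_flower_iff]
  set u := z⁻¹ * w with hu
  constructor
  · rintro ⟨rfl, hhead⟩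
    have hred : IsReduced (z.toWord ++ u.toWord) :=
      isReduced_append_iff.2 ⟨isReduced_toWord, isReduced_toWord, (hjunction _).2 hhead⟩
    have hW : w.toWord = z.toWord ++ u.toWord := by
      rw [← hred.toWord_mk, ← mul_mk, mk_toWord, mk_toWord, hu, mul_inv_cancel_left]
    exact ⟨by simp [FreeGroup.norm, hW], hW ▸ prefix_append _ _⟩
  · rintro ⟨hlen, U, hW⟩
    have hred := isReduced_append_iff.1 (hW ▸ isReduced_toWord)
    have hU : u.toWord = U := by
      rw [← hred.2.1.toWord_mk, hu, ← mk_toWord (x := w), ← hW, ← mul_mk, mk_toWord,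
        inv_mul_cancel_left]
    refine ⟨?_, hU ▸ (hjunction U).1 hred.2.2⟩
    have hWU := congrArg length hW
    simp only [FreeGroup.norm, hU, length_append] at hWU hlen ⊢
    omega

theorem head?_toWord_inv_mk_mul {g : F₂} {P G' : List (Fin 2 × Bool)} {s : Fin 2 × Bool}
    (hg : g.toWord = P ++ G') (hs : G'.head? ≠ some s) :
    ((mk (P ++ [s]))⁻¹ * g).toWord.head? = some (s.1, !s.2) := by
  have hred : IsReduced ([(s.1, !s.2)] ++ G') := by
    refine isReduced_append_iff.2 ⟨.singleton, (isReduced_toWord (x := g)).infix ?_, ?_⟩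
    · exact hg ▸ (suffix_append P G').isInfix
    · simp only [getLast?_singleton, Option.mem_some_iff, forall_eq', Bool.not_not]
      rintro b hb rfl
      exact hs hb
  have hmk : (mk (P ++ [s]))⁻¹ * g = mk ([(s.1, !s.2)] ++ G') := by
    calc (mk (P ++ [s]))⁻¹ * g = (mk [s])⁻¹ * mk G' := by
          rw [← mk_toWord (x := g), hg, ← mul_mk, ← mul_mk]
          group
      _ = mk ([(s.1, !s.2)] ++ G') := by rw [inv_mk, mul_mk]; rfl
  rw [hmk, hred.toWord_mk]
  rfl

theorem mem_flower_iff_of_not_prefix {g w : F₂} {t : ℕ} {Z : List (Fin 2 × Bool)}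
    (hZ : IsReduced Z) (hdrop : Z.dropLast <+: g.toWord) (hnot : ¬ Z <+: g.toWord) :
    w ∈ flower g (mk Z) t ↔ w.norm = Z.length + t ∧ Z <+: w.toWord := by
  obtain ⟨P, s, rfl⟩ := (eq_nil_or_concat' Z).resolve_left (by rintro rfl; exact hnot nil_prefix)
  rw [dropLast_concat] at hdrop
  obtain ⟨G', hG'⟩ := hdrop
  have hs : G'.head? ≠ some s := fun h =>
    hnot (hG' ▸ (prefix_append_right_inj P).2 (singleton_prefix_iff_head?_eq_some.2 h))
  rw [mem_flower_iff_prefix hZ.toWord_mk (head?_toWord_inv_mk_mul hG'.symm hs), hZ.norm_mk,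
    hZ.toWord_mk]

theorem isReduced_branchPrefix_toWord (v : F₂) (G : List (Fin 2 × Bool)) :
    IsReduced (branchPrefix v.toWord G) :=
  isReduced_toWord.infix (branchPrefix_prefix _ _).isInfix

/-- `(z, d(z, v))`, where `z` is the first vertex of the geodesic from `1` to `v` off the geodesic
from `1` to `g` (or `z = v`). -/
def branchFlower (g v : F₂) : F₂ × ℕ :=
  (mk (branchPrefix v.toWord g.toWord), v.norm - (branchPrefix v.toWord g.toWord).length)

theorem mem_flower_branchFlower_iff (g v w : F₂) :
    w ∈ flower g (branchFlower g v).1 (branchFlower g v).2 ↔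
      w.norm = v.norm ∧ branchPrefix w.toWord g.toWord = branchPrefix v.toWord g.toWord := by
  set Z := branchPrefix v.toWord g.toWord with hZdef
  have hZv : Z <+: v.toWord := branchPrefix_prefix _ _
  have hpre : w ∈ flower g (mk Z) (v.norm - Z.length) ↔ w.norm = v.norm ∧ Z <+: w.toWord := by
    rcases branchPrefix_eq_or_not_prefix v.toWord g.toWord with hV | hG
    · rw [← hZdef] at hV
      rw [hV, mk_toWord, show v.norm - v.toWord.length = 0 from Nat.sub_self _, flower_zero,
        Set.mem_singleton_iff]
      constructor
      · rintro rfl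
        exact ⟨rfl, prefix_refl _⟩
      · rintro ⟨hlen, hpre⟩
        exact toWord_injective (hpre.eq_of_length hlen.symm).symm
    · rw [mem_flower_iff_of_not_prefix (Z := Z) (isReduced_branchPrefix_toWord _ _)
        (dropLast_branchPrefix_prefix _ _) hG]
      have hZlen : Z.length ≤ v.norm := hZv.length_le
      constructor <;> rintro ⟨hlen, hZw⟩ <;> exact ⟨by omega, hZw⟩
  rw [branchFlower, hpre]
  exact and_congr_right fun hlen =>
    ⟨fun hZw => branchPrefix_eq_of_prefix hZw hlen, fun hZw => hZw ▸ branchPrefix_prefix _ _⟩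

theorem mem_flower_branchFlower_iff_of_mem {g h v : F₂} {r : ℕ} (hv : v ∈ flower h 1 r) (w : F₂) :
    w ∈ flower g (branchFlower g v).1 (branchFlower g v).2 ↔
      w ∈ flower h 1 r ∧ branchFlower g w = branchFlower g v := by
  have hT : ∀ u : F₂, u ∈ flower h 1 r ↔
      u.norm = r ∧ ∀ a ∈ u.toWord.head?, ∀ b ∈ h.toWord.head?, a ≠ b := fun u => by
    rw [mem_flower_iff, inv_one, one_mul, one_mul]
  rw [mem_flower_branchFlower_iff, hT]
  rw [hT] at hv
  constructor
  · rintro ⟨hlen, hZ⟩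
    refine ⟨⟨hlen.trans hv.1, ?_⟩, by rw [branchFlower, branchFlower, hZ, hlen]⟩
    rw [head?_eq_of_branchPrefix_eq hZ hlen]
    exact hv.2
  · rintro ⟨⟨hlen, -⟩, heq⟩
    refine ⟨hlen.trans hv.1.symm, ?_⟩
    simpa only [branchFlower, (isReduced_branchPrefix_toWord _ _).toWord_mk] using
      congrArg (fun p => p.1.toWord) heq

theorem exists_branchFlower_eq (g v : F₂) (hv : v ≠ 1) :
    ∃ k < g.norm + 1, ∃ s, branchFlower g v = (mk (g.toWord.take k ++ [s]), v.norm - (k + 1)) := by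
  set Z := branchPrefix v.toWord g.toWord
  have hZ : Z ≠ [] := branchPrefix_ne_nil _ (by rwa [Ne, toWord_eq_nil_iff])
  have hdrop : Z.dropLast <+: g.toWord := dropLast_branchPrefix_prefix _ _
  refine ⟨Z.dropLast.length, Nat.lt_succ_of_le hdrop.length_le, Z.getLast hZ, ?_⟩
  rw [← prefix_iff_eq_take.1 hdrop, dropLast_append_getLast, length_dropLast,
    Nat.sub_add_cancel (length_pos_of_ne_nil hZ)]
  rfl

theorem partition_of_mem_iff {α ι : Type*} {T : Set α} {f : ι → Set α} {c : α → ι}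
    (hc : ∀ v ∈ T, ∀ w, w ∈ f (c v) ↔ w ∈ T ∧ c w = c v) :
    (c '' T).PairwiseDisjoint f ∧ ⋃ i ∈ c '' T, f i = T ∧ ∀ i ∈ c '' T, (f i).Nonempty := by
  refine ⟨?_, ?_, ?_⟩
  · rintro _ ⟨v, hv, rfl⟩ _ ⟨v', hv', rfl⟩ hne
    refine Set.disjoint_left.2 fun w hw hw' => hne ?_
    rw [← ((hc v hv w).1 hw).2, ((hc v' hv' w).1 hw').2]
  · ext w
    simp only [Set.mem_iUnion, Set.mem_image, exists_prop]
    constructor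
    · rintro ⟨_, ⟨v, hv, rfl⟩, hw⟩
      exact ((hc v hv w).1 hw).1
    · exact fun hw => ⟨c w, ⟨w, hw, rfl⟩, (hc w hw w).2 ⟨hw, rfl⟩⟩
  · rintro _ ⟨v, hv, rfl⟩
    exact ⟨v, (hc v hv v).2 ⟨hv, rfl⟩⟩

theorem exists_flower_partition (x x' y : F₂) (r : ℕ) (hr : 1 ≤ r) :
    ∃ S : Finset (F₂ × ℕ), S.card ≤ 4 * (wordDist x y + 1) ∧
      (S : Set (F₂ × ℕ)).PairwiseDisjoint (fun p => flower x p.1 p.2) ∧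
      ⋃ p ∈ S, flower x p.1 p.2 = flower x' y r ∧ ∀ p ∈ S, (flower x p.1 p.2).Nonempty := by
  classical
  set g := y⁻¹ * x
  set T := flower x' y r
  set c : F₂ → F₂ × ℕ := fun v => (y * (branchFlower g (y⁻¹ * v)).1, (branchFlower g (y⁻¹ * v)).2)
  have htranslate : ∀ z t w, w ∈ flower x (y * z) t ↔ y⁻¹ * w ∈ flower g z t := fun z t w => by
    rw [← mem_flower_mul_left_iff y⁻¹, inv_mul_cancel_left]
  have hT : ∀ w, w ∈ T ↔ y⁻¹ * w ∈ flower (y⁻¹ * x') 1 r := fun w => by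
    rw [← mem_flower_mul_left_iff y⁻¹, inv_mul_cancel]
  have hc : ∀ v ∈ T, ∀ w, w ∈ flower x (c v).1 (c v).2 ↔ w ∈ T ∧ c w = c v := by
    intro v hv w
    rw [htranslate, mem_flower_branchFlower_iff_of_mem ((hT v).1 hv), ← hT]
    simp [c, Prod.ext_iff]
  obtain ⟨hdisj, hunion, hne⟩ := partition_of_mem_iff (f := fun p : F₂ × ℕ => flower x p.1 p.2) hc
  set candidates : Finset (F₂ × ℕ) :=
    (Finset.range (g.norm + 1) ×ˢ Finset.univ).image fun p : ℕ × (Fin 2 × Bool) =>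
      (y * mk (g.toWord.take p.1 ++ [p.2]), r - (p.1 + 1))
  have hsub : c '' T ⊆ candidates := by
    rintro _ ⟨v, hv, rfl⟩
    have hnorm : (y⁻¹ * v).norm = r := (wordDist_comm_s8 y v).trans hv.1
    have hv1 : y⁻¹ * v ≠ 1 := fun h => by rw [h, FreeGroup.norm_one] at hnorm; omega
    obtain ⟨k, hk, s, hks⟩ := exists_branchFlower_eq g _ hv1
    exact Finset.mem_image.2 ⟨(k, s), by simp [hk], by simp [c, hks, hnorm]⟩
  have hcard : candidates.card ≤ 4 * (wordDist x y + 1) := by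
    have hgx : g.norm = wordDist x y := wordDist_comm_s8 y x
    refine Finset.card_image_le.trans ?_
    rw [Finset.card_product, Finset.card_range, Finset.card_univ, Fintype.card_prod,
      Fintype.card_fin, Fintype.card_bool, hgx]
    omega
  have hS : ((candidates.filter (· ∈ c '' T)) : Set (F₂ × ℕ)) = c '' T := by
    ext p
    simpa using fun hp => hsub hp
  refine ⟨candidates.filter (· ∈ c '' T), (Finset.card_filter_le _ _).trans hcard, ?_, ?_, ?_⟩
  · rw [hS]
    exact hdisj
  · rw [← Finset.set_biUnion_coe, hS, hunion]
  · exact fun p hp => hne p (hS ▸ hp)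

/-- **Flower decomposition under base change along the geodesic (Lafforgue (5.14)–(5.15)).**
If `y` lies on the geodesic from `x₀` to `x₀'` and `r ≥ 1`, then the flower `Fl_{x₀'}(y,r)`
is the disjoint union of at most `4 (d(x₀,x₀') + 1)` flowers `Fl_{x₀}(y_j, r_j)` with
`d(x₀,y_j) + r_j ≥ d(x₀',y) + r − d(x₀,x₀')`. -/
theorem flower_decomposition (x₀ x₀' y : FreeGroup (Fin 2))
    (hy : wordDist x₀ y + wordDist y x₀' = wordDist x₀ x₀') (r : ℕ) (hr : 1 ≤ r) :
    ∃ (n : ℕ) (ys : Fin n → FreeGroup (Fin 2)) (rs : Fin n → ℕ),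
      n ≤ 4 * (wordDist x₀ x₀' + 1) ∧
      (∀ i j : Fin n, i ≠ j → Disjoint (flower x₀ (ys i) (rs i)) (flower x₀ (ys j) (rs j))) ∧
      (⋃ j : Fin n, flower x₀ (ys j) (rs j)) = flower x₀' y r ∧
      (∀ j : Fin n,
        wordDist x₀' y + r ≤ wordDist x₀ (ys j) + rs j + wordDist x₀ x₀') := by
  obtain ⟨S, hcard, hdisj, hunion, hne⟩ := exists_flower_partition x₀ x₀' y r hr
  let e := S.equivFin.symm
  refine ⟨S.card, fun j => (e j).1.1, fun j => (e j).1.2, by omega, ?_, ?_, ?_⟩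
  · intro i j hij
    exact hdisj (e i).2 (e j).2 fun h => hij (e.injective (Subtype.ext h))
  · rw [← hunion, ← Set.iUnion_subtype (· ∈ S) fun p => flower x₀ p.1.1 p.1.2]
    exact e.iSup_comp (g := fun p : S => flower x₀ p.1.1 p.1.2)
  · intro j
    obtain ⟨v, hv⟩ := hne _ (e j).2
    exact le_wordDist_add_of_mem_flower hv (hunion ▸ Set.mem_biUnion (e j).2 hv)
end

section
/- Let F₂ be the free group on two generators with word metric d, let λ > 1, x₀ ∈ F₂, and let f : F₂ → ℂ be finitely supported. With N_{x₀,λ}(f)² = (1−λ^{−2})^{−1} ∑_{g∈F₂} |f(g)|² + ∑_{y∈F₂} ∑_{r=1}^{∞} λ^{2r} |∑_{v∈Fl_{x₀}(y,r)} f(v)|², the summation functional satisfies |∑_{g∈F₂} f(g)|² ≤ (1−λ^{−2})^{−1} · N_{x₀,λ}(f)². -/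
open scoped BigOperators

/-- The square `N_{x₀,λ}(f)²` of Lafforgue's Hilbert norm on finitely supported functions
on the free group. -/
noncomputable def lafNormSq (lam : ℝ) (x₀ : FreeGroup (Fin 2))
    (f : FreeGroup (Fin 2) → ℂ) : ℝ :=
  (1 - lam⁻¹ ^ 2)⁻¹ * (∑' g : FreeGroup (Fin 2), ‖f g‖ ^ 2) +
    ∑' (y : FreeGroup (Fin 2)), ∑' (r : ℕ),
      lam ^ (2 * (r + 1)) * ‖∑ᶠ v ∈ flower x₀ y (r + 1), f v‖ ^ 2

/-- Balls in the word metric on `F₂` are finite. -/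
lemma wordBall_finite (x₀ : FreeGroup (Fin 2)) (n : ℕ) :
    {y : FreeGroup (Fin 2) | wordDist y x₀ ≤ n}.Finite := by
  have h1 : {g : FreeGroup (Fin 2) | FreeGroup.norm g ≤ n}.Finite := by
    have hsub : {g : FreeGroup (Fin 2) | FreeGroup.norm g ≤ n}
        ⊆ FreeGroup.toWord ⁻¹' {l : List (Fin 2 × Bool) | l.length ≤ n} := fun g hg => hg
    exact (Set.Finite.preimage FreeGroup.toWord_injective.injOn
      (List.finite_length_le _ n)).subset hsub
  have hsub : {y : FreeGroup (Fin 2) | wordDist y x₀ ≤ n}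
      ⊆ (fun g => x₀ * g⁻¹) '' {g | FreeGroup.norm g ≤ n} := by
    intro y hy
    exact ⟨y⁻¹ * x₀, hy, by group⟩
  exact ((h1.image _).subset hsub)

/-- **Boundedness of the summation functional ((5.19)–(5.20)).**
For finitely supported `f : F₂ → ℂ`,
`|∑_g f(g)|² ≤ (1-λ⁻²)⁻¹ N_{x₀,λ}(f)²`. -/
theorem lafforgue_summation_functional_bounded (lam : ℝ) (hlam : 1 < lam)
    (x₀ : FreeGroup (Fin 2)) (f : FreeGroup (Fin 2) → ℂ)
    (hf : (Function.support f).Finite) :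
    ‖∑ᶠ g : FreeGroup (Fin 2), f g‖ ^ 2 ≤ (1 - lam⁻¹ ^ 2)⁻¹ * lafNormSq lam x₀ f := by
  classical
  have hlam0 : (0:ℝ) < lam := lt_trans one_pos hlam
  have hlamne : lam ≠ 0 := ne_of_gt hlam0
  have hinv1 : lam⁻¹ < 1 := by
    rw [inv_lt_one_iff₀]
    right
    exact hlam
  have hinv0 : (0:ℝ) ≤ lam⁻¹ := inv_nonneg.mpr hlam0.le
  have hx0 : (0:ℝ) ≤ lam⁻¹ ^ 2 := by positivity
  have hx1 : lam⁻¹ ^ 2 < 1 := by nlinarith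
  have h1x : (0:ℝ) < 1 - lam⁻¹ ^ 2 := by linarith
  have hcoef1 : (1:ℝ) ≤ (1 - lam⁻¹ ^ 2)⁻¹ := by
    have h := inv_anti₀ h1x (by nlinarith : 1 - lam⁻¹ ^ 2 ≤ 1)
    simpa using h
  have hcoef0 : (0:ℝ) ≤ (1 - lam⁻¹ ^ 2)⁻¹ := le_trans zero_le_one hcoef1
  set N : ℕ := hf.toFinset.sup fun v => wordDist v x₀ with hNdef
  have hsupp : ∀ v, f v ≠ 0 → wordDist v x₀ ≤ N := fun v hv =>
    Finset.le_sup (f := fun v => wordDist v x₀) (hf.mem_toFinset.2 hv)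
  have hdist0 : wordDist x₀ x₀ = 0 := by simp [wordDist]
  -- vanishing of flower sums beyond the support radius
  have hvan : ∀ (y : FreeGroup (Fin 2)) (r : ℕ), N < r + wordDist y x₀ →
      (∑ᶠ v ∈ flower x₀ y r, f v) = 0 := by
    intro y r hr
    apply finsum_mem_of_eqOn_zero
    intro v hv
    by_contra hne
    have h1 := hsupp v hne
    have h2 := hv.2
    omega
  set c : ℕ → ℂ := fun r => ∑ᶠ v ∈ flower x₀ x₀ r, f v with hcdef
  -- spheres
  have hsphere : ∀ r, flower x₀ x₀ r = {v | wordDist v x₀ = r} := by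
    intro r
    ext v
    simp [flower, hdist0]
  -- Step 1: the full sum decomposes along spheres
  have hstep1 : (∑ᶠ g : FreeGroup (Fin 2), f g) = ∑ r ∈ Finset.range (N + 1), c r := by
    have hcr : ∀ r, c r = ∑ v ∈ hf.toFinset.filter (fun v => wordDist v x₀ = r), f v := by
      intro r
      have hfin : (flower x₀ x₀ r ∩ Function.support f).Finite :=
        hf.subset Set.inter_subset_right
      rw [show c r = ∑ᶠ v ∈ flower x₀ x₀ r, f v from rfl, finsum_mem_eq_sum f hfin]
      apply Finset.sum_congr
      · ext v
        simp only [Set.Finite.mem_toFinset, Set.mem_inter_iff, Finset.mem_filter,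
          hsphere r, Set.mem_setOf_eq, Function.mem_support]
        tauto
      · intro _ _; rfl
    rw [finsum_eq_sum f hf]
    rw [← Finset.sum_fiberwise_of_maps_to (g := fun v => wordDist v x₀)
      (t := Finset.range (N + 1)) (fun v hv => Finset.mem_range.mpr
        (Nat.lt_succ_of_le (Finset.le_sup (f := fun v => wordDist v x₀) hv))) f]
    exact Finset.sum_congr rfl fun r _ => (hcr r).symm
  -- Step 2: Cauchy–Schwarz
  have hstep2 : ‖∑ r ∈ Finset.range (N + 1), c r‖ ^ 2 ≤
      (∑ r ∈ Finset.range (N + 1), (lam⁻¹ ^ 2) ^ r) *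
        ∑ r ∈ Finset.range (N + 1), (lam ^ r * ‖c r‖) ^ 2 := by
    calc ‖∑ r ∈ Finset.range (N + 1), c r‖ ^ 2
        ≤ (∑ r ∈ Finset.range (N + 1), ‖c r‖) ^ 2 := by
          apply pow_le_pow_left₀ (norm_nonneg _) (norm_sum_le _ _)
      _ = (∑ r ∈ Finset.range (N + 1), lam⁻¹ ^ r * (lam ^ r * ‖c r‖)) ^ 2 := by
          congr 1
          apply Finset.sum_congr rfl
          intro r _
          rw [← mul_assoc, ← mul_pow, inv_mul_cancel₀ hlamne, one_pow, one_mul]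
      _ ≤ (∑ r ∈ Finset.range (N + 1), (lam⁻¹ ^ r) ^ 2) *
            ∑ r ∈ Finset.range (N + 1), (lam ^ r * ‖c r‖) ^ 2 :=
          Finset.sum_mul_sq_le_sq_mul_sq _ _ _
      _ = (∑ r ∈ Finset.range (N + 1), (lam⁻¹ ^ 2) ^ r) *
            ∑ r ∈ Finset.range (N + 1), (lam ^ r * ‖c r‖) ^ 2 := by
          congr 1
          apply Finset.sum_congr rfl
          intro r _
          rw [← pow_mul, ← pow_mul, Nat.mul_comm]
  -- Step 3: geometric estimate
  have hstep3 : (∑ r ∈ Finset.range (N + 1), (lam⁻¹ ^ 2) ^ r) ≤ (1 - lam⁻¹ ^ 2)⁻¹ := by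
    rw [← tsum_geometric_of_lt_one hx0 hx1]
    exact Summable.sum_le_tsum (Finset.range (N + 1)) (fun i _ => pow_nonneg hx0 i)
      (summable_geometric_of_lt_one hx0 hx1)
  -- summabilities
  have hsummf : Summable fun g : FreeGroup (Fin 2) => ‖f g‖ ^ 2 := by
    apply summable_of_ne_finset_zero (s := hf.toFinset)
    intro g hg
    have : f g = 0 := by
      by_contra h
      exact hg (hf.mem_toFinset.2 h)
    simp [this]
  set T : FreeGroup (Fin 2) → ℕ → ℝ := fun y r =>
    lam ^ (2 * (r + 1)) * ‖∑ᶠ v ∈ flower x₀ y (r + 1), f v‖ ^ 2 with hTdef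
  have hTnonneg : ∀ y r, 0 ≤ T y r := by
    intro y r
    exact mul_nonneg (by positivity) (by positivity)
  have hTvan : ∀ y r, N < r + 1 + wordDist y x₀ → T y r = 0 := by
    intro y r h
    have h0 := hvan y (r + 1) h
    rw [hTdef]
    simp only
    rw [h0]
    simp
  have hTsummable : ∀ y, Summable (T y) := by
    intro y
    apply summable_of_ne_finset_zero (s := Finset.range (N + 1))
    intro r hr
    rw [Finset.mem_range, not_lt] at hr
    exact hTvan y r (by omega)
  have hTouter : Summable fun y => ∑' r, T y r := by
    apply summable_of_ne_finset_zero (s := (wordBall_finite x₀ N).toFinset)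
    intro y hy
    rw [Set.Finite.mem_toFinset, Set.mem_setOf_eq, not_le] at hy
    have hz : ∀ r, T y r = 0 := fun r => hTvan y r (by omega)
    simp [hz]
  -- Step 4: the weighted sphere sums are bounded by the Lafforgue norm
  have hstep4 : (∑ r ∈ Finset.range (N + 1), (lam ^ r * ‖c r‖) ^ 2) ≤ lafNormSq lam x₀ f := by
    rw [Finset.sum_range_succ', add_comm]
    unfold lafNormSq
    apply add_le_add
    · -- head term
      have hc0 : c 0 = f x₀ := by
        have hflow0 : flower x₀ x₀ 0 = {x₀} := by
          rw [hsphere 0]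
          ext v
          simp only [Set.mem_setOf_eq, Set.mem_singleton_iff, wordDist,
            FreeGroup.norm_eq_zero, inv_mul_eq_one]
        rw [hcdef]
        simp only
        rw [hflow0, finsum_mem_singleton]
      rw [hc0]
      simp only [pow_zero, one_mul]
      calc ‖f x₀‖ ^ 2 ≤ ∑' g, ‖f g‖ ^ 2 :=
            Summable.le_tsum hsummf x₀ fun g _ => by positivity
        _ ≤ (1 - lam⁻¹ ^ 2)⁻¹ * ∑' g, ‖f g‖ ^ 2 :=
            le_mul_of_one_le_left (tsum_nonneg fun g => by positivity) hcoef1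
    · -- tail terms
      have heq : ∀ i, (lam ^ (i + 1) * ‖c (i + 1)‖) ^ 2 = T x₀ i := by
        intro i
        rw [hTdef]
        simp only
        rw [mul_pow, ← pow_mul, Nat.mul_comm]
      calc (∑ i ∈ Finset.range N, (lam ^ (i + 1) * ‖c (i + 1)‖) ^ 2)
          = ∑ i ∈ Finset.range N, T x₀ i :=
            Finset.sum_congr rfl fun i _ => heq i
        _ ≤ ∑' r, T x₀ r :=
            Summable.sum_le_tsum _ (fun i _ => hTnonneg _ _) (hTsummable x₀)
        _ ≤ ∑' y, ∑' r, T y r :=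
            Summable.le_tsum hTouter x₀ fun y _ => tsum_nonneg fun r => hTnonneg y r
  rw [hstep1]
  calc ‖∑ r ∈ Finset.range (N + 1), c r‖ ^ 2
      ≤ (∑ r ∈ Finset.range (N + 1), (lam⁻¹ ^ 2) ^ r) *
          ∑ r ∈ Finset.range (N + 1), (lam ^ r * ‖c r‖) ^ 2 := hstep2
    _ ≤ (1 - lam⁻¹ ^ 2)⁻¹ * lafNormSq lam x₀ f :=
        mul_le_mul hstep3 hstep4 (Finset.sum_nonneg fun i _ => by positivity) hcoef0
end

section
/- Let F₂ be the free group on free generators a₁, a₂, let V = F₂ (vertices) and E = F₂ × {1,2} (edges, the edge (g,i) joining g to g·aᵢ). Define linear maps on finitely supported functions: ∂ : ℂ[E] → ℂ[V] by ∂(δ_{(g,i)}) = δ_{g·aᵢ} − δ_g, and h : ℂ[V] → ℂ[E] by h(δ_g) = ∑_{j=1}^{n} ε_j δ_{e_j}, where g = σ₁σ₂⋯σ_n is the reduced word of g and, for each j, if σ_j = a_i then e_j = (σ₁⋯σ_{j−1}, i) with ε_j = +1, while if σ_j = a_i^{−1} then e_j = (σ₁⋯σ_j, i) with ε_j = −1.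 Then: (1) ∂ ∘ h = Id − p₁ on ℂ[V], where p₁(f) = (∑_{g} f(g))·δ₁ is the rank-one map onto the basis vector at the identity; and (2) h ∘ ∂ = Id on ℂ[E]. -/
open scoped BigOperators

/-- Vertices of the Cayley tree of the free group on two generators. -/
abbrev JVVert := FreeGroup (Fin 2)

/-- Edges of the Cayley tree: the edge `(g, i)` joins `g` to `g * aᵢ`. -/
abbrev JVEdge := FreeGroup (Fin 2) × Fin 2

/-- The simplicial boundary `∂ : ℂ[E] → ℂ[V]`, `∂ δ_{(g,i)} = δ_{g·aᵢ} - δ_g`. -/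
noncomputable def jvBoundary : (JVEdge →₀ ℂ) →ₗ[ℂ] (JVVert →₀ ℂ) :=
  Finsupp.lsum ℂ fun e =>
    LinearMap.toSpanSingleton ℂ (JVVert →₀ ℂ)
      (Finsupp.single (e.1 * FreeGroup.of e.2) 1 - Finsupp.single e.1 1)

/-- The contribution of the `j`-th letter (`0`-indexed) of a reduced word `L` to the
Julg–Valette contraction: if the letter is a generator `aᵢ` the term is `+δ_{(prefix, i)}`
where the prefix has length `j`; if it is an inverse `aᵢ⁻¹` the term is `-δ_{(prefix, i)}`
where the prefix has length `j+1`. -/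
noncomputable def jvTerm (L : List (Fin 2 × Bool)) (j : ℕ) : JVEdge →₀ ℂ :=
  let σ := L.getD j default
  if σ.2 then Finsupp.single (FreeGroup.mk (L.take j), σ.1) 1
  else -Finsupp.single (FreeGroup.mk (L.take (j + 1)), σ.1) 1

/-- The Julg–Valette contraction `h : ℂ[V] → ℂ[E]` sending `δ_g` to the signed sum of the
edges of the geodesic from `g` to the identity, read off from the reduced word of `g`. -/
noncomputable def jvH : (JVVert →₀ ℂ) →ₗ[ℂ] (JVEdge →₀ ℂ) :=
  Finsupp.lsum ℂ fun g =>
    LinearMap.toSpanSingleton ℂ (JVEdge →₀ ℂ)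
      (∑ j ∈ Finset.range (FreeGroup.toWord g).length, jvTerm (FreeGroup.toWord g) j)

/-- The rank-one map `p₁ : ℂ[V] → ℂ[V]`, `f ↦ (∑_g f(g)) · δ₁`. -/
noncomputable def jvProjOne : (JVVert →₀ ℂ) →ₗ[ℂ] (JVVert →₀ ℂ) :=
  Finsupp.lsum ℂ fun _ =>
    LinearMap.toSpanSingleton ℂ (JVVert →₀ ℂ) (Finsupp.single 1 1)

/-!
Write `h δ_g` as the signed chain `jvChain` along the reduced word of `g`. Appending a letter
to a word adds one signed edge to this chain, so `∂ (h δ_g)` telescopes to `δ_g - δ_1`.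
For `h ∂ = Id`: either the reduced word of `g` ends in `aᵢ⁻¹` and deleting that letter gives
the reduced word of `g aᵢ`, or the reduced word of `g aᵢ` is that of `g` followed by `aᵢ`.
In both cases the two geodesic chains differ exactly by the edge `(g, i)`.
-/

namespace FreeGroup

variable {α : Type*} [DecidableEq α]

theorem toWord_mk_of_isReduced {L : List (α × Bool)} (h : IsReduced L) : (mk L).toWord = L := by
  rw [toWord_mk, h.reduce_eq]

theorem toWord_mul_of_of_toWord_eq_concat {g : FreeGroup α} {a : α} {u : List (α × Bool)}
    (h : g.toWord = u ++ [(a, false)]) : (g * of a).toWord = u := by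
  have hg : g * of a = mk u := by
    rw [← mk_toWord (x := g), h, ← mul_mk, mul_assoc, show mk [(a, false)] = (of a)⁻¹ from rfl,
      inv_mul_cancel, mul_one]
  rw [hg, toWord_mk_of_isReduced (isReduced_toWord.infix (h ▸ List.prefix_append u _).isInfix)]

theorem toWord_mul_of_of_getLast?_ne {g : FreeGroup α} {a : α}
    (h : g.toWord.getLast? ≠ some (a, false)) : (g * of a).toWord = g.toWord ++ [(a, true)] := by
  have hred : IsReduced (g.toWord ++ [(a, true)]) := by
    refine List.IsChain.append isReduced_toWord IsReduced.singleton ?_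
    rintro ⟨b, s⟩ hb _ ⟨⟩ (rfl : b = a)
    cases s
    · exact absurd hb h
    · rfl
  rw [← toWord_mk_of_isReduced hred, ← mul_mk, mk_toWord]
  rfl

end FreeGroup

open FreeGroup

theorem jvTerm_append_of_lt {L M : List (Fin 2 × Bool)} {j : ℕ} (hj : j < L.length) :
    jvTerm (L ++ M) j = jvTerm L j := by
  simp only [jvTerm, List.getD_append _ _ _ _ hj, List.take_append_of_le_length hj.le,
    List.take_append_of_le_length hj]

theorem jvTerm_concat_length (L : List (Fin 2 × Bool)) (x : Fin 2 × Bool) :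
    jvTerm (L ++ [x]) L.length =
      if x.2 then Finsupp.single (mk L, x.1) 1
      else -Finsupp.single (mk (L ++ [x]), x.1) 1 := by
  have htake : (L ++ [x]).take (L.length + 1) = L ++ [x] := List.take_of_length_le (by simp)
  simp [jvTerm, htake]

noncomputable def jvChain (L : List (Fin 2 × Bool)) : JVEdge →₀ ℂ :=
  ∑ j ∈ Finset.range L.length, jvTerm L j

theorem jvChain_concat (L : List (Fin 2 × Bool)) (x : Fin 2 × Bool) :
    jvChain (L ++ [x]) = jvChain L + jvTerm (L ++ [x]) L.length := by
  rw [jvChain, jvChain, List.length_append, List.length_singleton, Finset.sum_range_succ]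
  congr 1
  exact Finset.sum_congr rfl fun j hj => jvTerm_append_of_lt (Finset.mem_range.mp hj)

theorem jvChain_concat_true (L : List (Fin 2 × Bool)) (i : Fin 2) :
    jvChain (L ++ [(i, true)]) = jvChain L + Finsupp.single (mk L, i) 1 := by
  rw [jvChain_concat, jvTerm_concat_length, if_pos rfl]

theorem jvChain_concat_false (L : List (Fin 2 × Bool)) (i : Fin 2) :
    jvChain (L ++ [(i, false)]) = jvChain L - Finsupp.single (mk (L ++ [(i, false)]), i) 1 := by
  rw [jvChain_concat, jvTerm_concat_length, if_neg Bool.false_ne_true, sub_eq_add_neg]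

theorem jvBoundary_single (e : JVEdge) :
    jvBoundary (Finsupp.single e 1) =
      Finsupp.single (e.1 * of e.2) 1 - Finsupp.single e.1 1 := by
  simp [jvBoundary]

theorem jvH_single (g : JVVert) : jvH (Finsupp.single g 1) = jvChain g.toWord := by
  simp [jvH, jvChain]

theorem jvProjOne_single (g : JVVert) : jvProjOne (Finsupp.single g 1) = Finsupp.single 1 1 := by
  simp [jvProjOne]

theorem jvBoundary_jvChain (L : List (Fin 2 × Bool)) :
    jvBoundary (jvChain L) = Finsupp.single (mk L) 1 - Finsupp.single 1 1 := by
  induction L using List.reverseRecOn with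
  | nil => simp [jvChain, one_eq_mk]
  | append_singleton L x ih =>
    obtain ⟨i, _ | _⟩ := x
    · rw [jvChain_concat_false, map_sub, ih, jvBoundary_single, ← mul_mk]
      simp only [show mk [(i, false)] = (of i)⁻¹ from rfl, inv_mul_cancel_right]
      abel
    · rw [jvChain_concat_true, map_add, ih, jvBoundary_single, ← mul_mk]
      simp only [show mk [(i, true)] = of i from rfl]
      abel

theorem jvBoundary_jvH_single (g : JVVert) :
    jvBoundary (jvH (Finsupp.single g 1)) =
      Finsupp.single g 1 - jvProjOne (Finsupp.single g 1) := by
  rw [jvH_single, jvBoundary_jvChain, mk_toWord, jvProjOne_single]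

theorem jvH_jvBoundary_single (e : JVEdge) :
    jvH (jvBoundary (Finsupp.single e 1)) = Finsupp.single e 1 := by
  obtain ⟨g, i⟩ := e
  rw [jvBoundary_single, map_sub, jvH_single, jvH_single]
  by_cases hlast : g.toWord.getLast? = some (i, false)
  · obtain ⟨u, hu⟩ := List.getLast?_eq_some_iff.mp hlast
    rw [toWord_mul_of_of_toWord_eq_concat hu, hu, jvChain_concat_false, ← hu, mk_toWord]
    abel
  · rw [toWord_mul_of_of_getLast?_ne hlast, jvChain_concat_true, mk_toWord]
    abel

/-- **The Julg–Valette contracting chain homotopy for the Cayley tree of `F₂`.**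
`∂ ∘ h = Id - p₁` on `ℂ[V]` and `h ∘ ∂ = Id` on `ℂ[E]`. -/
theorem julg_valette_homotopy :
    jvBoundary ∘ₗ jvH = LinearMap.id - jvProjOne ∧
      jvH ∘ₗ jvBoundary = LinearMap.id := by
  constructor
  · ext g : 2
    exact jvBoundary_jvH_single g
  · ext e : 2
    exact jvH_jvBoundary_single e
end

section
/- Let X be a countable type, w : X → ℤ a function, R ∈ ℕ, and let A be a bounded linear operator on the Hilbert space ℓ²(X) whose matrix coefficients satisfy ⟨A e_x, e_y⟩ = 0 whenever |w(x) − w(y)| > R (where (e_x) is the standard orthonormal basis). Then for every t ≥ 0 there exists a bounded linear operator A_t on ℓ²(X) with matrix coefficients ⟨A_t e_x, e_y⟩ = e^{t·(w(y) − w(x))}·⟨A e_x, e_y⟩ for all x, y, and ‖A_t‖ ≤ (2R+1)·e^{tR}·‖A‖. -/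
/-!
Split `A` into its diagonals `A_k`, the parts with `w y - w x = k`; by the band condition only
`|k| ≤ R` occur, and `A_t = ∑_{|k| ≤ R} e^{tk} A_k`. Each diagonal has norm at most `‖A‖`: for a
primitive `N`-th root of unity `ζ` and `N > R + |k|`, the average of `ζ^{-jk} M_j A M_j⁻¹` over
`j < N`, where `M_j` multiplies by the unimodular function `ζ^{j w}`, has entries
`[N ∣ w y - w x - k] A_{xy}` by orthogonality of the characters of `ℤ/N`, and this is `A_k`.
-/

open scoped ComplexConjugate

theorem IsPrimitiveRoot.sum_range_zpow_pow {K : Type*} [Field K] {ζ : K} {N : ℕ}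
    (hζ : IsPrimitiveRoot ζ N) (n : ℤ) :
    ∑ j ∈ Finset.range N, (ζ ^ n) ^ j = if (N : ℤ) ∣ n then (N : K) else 0 := by
  split_ifs with hn
  · simp [(hζ.zpow_eq_one_iff_dvd n).2 hn]
  · have hpow : (ζ ^ n) ^ N = 1 := by
      rw [← zpow_natCast, ← zpow_mul, mul_comm, zpow_mul, zpow_natCast, hζ.pow_eq_one, one_zpow]
    rw [geom_sum_eq (mt (hζ.zpow_eq_one_iff_dvd n).1 hn), hpow, sub_self, zero_div]

theorem norm_sum_Icc_exp_smul_le {E : Type*} [SeminormedAddCommGroup E] [NormedSpace ℂ E]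
    (R : ℕ) {t : ℝ} (ht : 0 ≤ t) (T : ℤ → E) {C : ℝ} (hT : ∀ k, ‖T k‖ ≤ C) :
    ‖∑ k ∈ Finset.Icc (-(R : ℤ)) R, (Real.exp (t * k) : ℂ) • T k‖ ≤
      (2 * (R : ℝ) + 1) * Real.exp (t * R) * C :=
  calc _ ≤ ∑ _k ∈ Finset.Icc (-(R : ℤ)) R, Real.exp (t * R) * C := by
        refine norm_sum_le_of_le _ fun k hk => ?_
        rw [norm_smul, Complex.norm_real, Real.norm_of_nonneg (Real.exp_pos _).le]
        gcongr
        · exact_mod_cast (Finset.mem_Icc.1 hk).2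
        · exact hT k
    _ = _ := by
        rw [Finset.sum_const, Int.card_Icc, show ((R : ℤ) + 1 - -R).toNat = 2 * R + 1 by omega,
          nsmul_eq_mul]
        push_cast
        ring

section

variable {X : Type*}

noncomputable def circleMul (u : X → Circle) : lp (fun _ : X => ℂ) 2 →L[ℂ] lp (fun _ : X => ℂ) 2 :=
  lp.mapCLM 2 (fun x => (u x : ℂ) • ContinuousLinearMap.id ℂ ℂ) zero_le_one fun x => by
    simp [norm_smul, Circle.norm_coe]

@[simp]
theorem circleMul_apply (u : X → Circle) (f : lp (fun _ : X => ℂ) 2) (x : X) :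
    circleMul u f x = u x * f x := by
  simp [circleMul]

theorem norm_circleMul_le (u : X → Circle) : ‖circleMul u‖ ≤ 1 :=
  lp.norm_mapCLM_le ..

theorem circleMul_single [DecidableEq X] (u : X → Circle) (x : X) (a : ℂ) :
    circleMul u (lp.single 2 x a) = lp.single 2 x (u x * a) := by
  ext y
  rcases eq_or_ne y x with rfl | h <;> simp [lp.single_apply, *]

noncomputable def circleConj (u : X → Circle)
    (A : lp (fun _ : X => ℂ) 2 →L[ℂ] lp (fun _ : X => ℂ) 2) :
    lp (fun _ : X => ℂ) 2 →L[ℂ] lp (fun _ : X => ℂ) 2 :=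
  circleMul u ∘L A ∘L circleMul u⁻¹

theorem circleConj_single_apply [DecidableEq X] (u : X → Circle)
    (A : lp (fun _ : X => ℂ) 2 →L[ℂ] lp (fun _ : X => ℂ) 2) (x y : X) :
    circleConj u A (lp.single 2 x 1) y = u y * (u x : ℂ)⁻¹ * A (lp.single 2 x 1) y := by
  have hsingle : lp.single (E := fun _ : X => ℂ) 2 x (u⁻¹ x) = (u x : ℂ)⁻¹ • lp.single 2 x 1 := by
    rw [← lp.single_smul, smul_eq_mul, mul_one, Pi.inv_apply, Circle.coe_inv]
  simp only [circleConj, ContinuousLinearMap.comp_apply, circleMul_single, mul_one, hsingle,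
    map_smul, circleMul_apply, lp.coeFn_smul, Pi.smul_apply, smul_eq_mul]
  ring

theorem norm_circleConj_le (u : X → Circle)
    (A : lp (fun _ : X => ℂ) 2 →L[ℂ] lp (fun _ : X => ℂ) 2) : ‖circleConj u A‖ ≤ ‖A‖ :=
  calc ‖circleConj u A‖ ≤ ‖circleMul u‖ * (‖A‖ * ‖circleMul u⁻¹‖) :=
        (ContinuousLinearMap.opNorm_comp_le _ _).trans
          (mul_le_mul_of_nonneg_left (ContinuousLinearMap.opNorm_comp_le _ _) (norm_nonneg _))
    _ ≤ 1 * (‖A‖ * 1) := by gcongr <;> exact norm_circleMul_le _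
    _ = ‖A‖ := by ring

theorem inner_single_one_right [DecidableEq X] (f : lp (fun _ : X => ℂ) 2) (y : X) :
    inner ℂ f (lp.single 2 y 1) = conj (f y) := by
  simp [lp.inner_single_right]

theorem exists_diagonal_mod [DecidableEq X] (w : X → ℤ) {N : ℕ} (hN : N ≠ 0) (k : ℤ)
    (A : lp (fun _ : X => ℂ) 2 →L[ℂ] lp (fun _ : X => ℂ) 2) :
    ∃ D : lp (fun _ : X => ℂ) 2 →L[ℂ] lp (fun _ : X => ℂ) 2,
      (∀ x y, D (lp.single 2 x 1) y =
        if (N : ℤ) ∣ w y - w x - k then A (lp.single 2 x 1) y else 0) ∧ ‖D‖ ≤ ‖A‖ := by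
  obtain ⟨ζ, hζ⟩ : ∃ ζ : Circle, IsPrimitiveRoot (ζ : ℂ) N :=
    ⟨⟨_, mem_sphere_zero_iff_norm.2 ((Complex.isPrimitiveRoot_exp N hN).norm'_eq_one hN)⟩,
      Complex.isPrimitiveRoot_exp N hN⟩
  refine ⟨(N : ℂ)⁻¹ • ∑ j ∈ Finset.range N,
    ((ζ : ℂ) ^ k)⁻¹ ^ j • circleConj (fun x => (ζ ^ j) ^ w x) A, fun x y => ?_, ?_⟩
  · have hphase (j : ℕ) : ((ζ : ℂ) ^ k)⁻¹ ^ j * ((ζ ^ j) ^ w y : Circle) *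
        (((ζ ^ j) ^ w x : Circle) : ℂ)⁻¹ = ((ζ : ℂ) ^ (w y - w x - k)) ^ j := by
      simp only [Circle.coe_zpow, ← zpow_natCast, ← zpow_mul, ← zpow_neg,
        ← zpow_add₀ (Circle.coe_ne_zero ζ)]
      ring_nf
    simp only [smul_apply, sum_apply, lp.coeFn_smul, lp.coeFn_sum, Pi.smul_apply,
      Finset.sum_apply, smul_eq_mul, circleConj_single_apply, ← mul_assoc, hphase,
      ← Finset.sum_mul, hζ.sum_range_zpow_pow]
    split_ifs
    · field_simp [Nat.cast_ne_zero.2 hN]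
    · simp
  · have hterm (j : ℕ) :
        ‖((ζ : ℂ) ^ k)⁻¹ ^ j • circleConj (fun x => (ζ ^ j) ^ w x) A‖ ≤ ‖A‖ := by
      simpa [norm_smul, Circle.norm_coe] using norm_circleConj_le _ A
    calc _ = (N : ℝ)⁻¹ * ‖∑ j ∈ Finset.range N,
            ((ζ : ℂ) ^ k)⁻¹ ^ j • circleConj (fun x => (ζ ^ j) ^ w x) A‖ := by
          rw [norm_smul, norm_inv, Complex.norm_natCast]
      _ ≤ (N : ℝ)⁻¹ * ∑ _j ∈ Finset.range N, ‖A‖ := by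
          gcongr
          exact norm_sum_le_of_le _ fun j _ => hterm j
      _ = ‖A‖ := by
          rw [Finset.sum_const, Finset.card_range, nsmul_eq_mul]
          field_simp

theorem exists_diagonal_of_band [DecidableEq X] (w : X → ℤ) (R : ℕ)
    (A : lp (fun _ : X => ℂ) 2 →L[ℂ] lp (fun _ : X => ℂ) 2)
    (hband : ∀ x y, (R : ℤ) < |w y - w x| → A (lp.single 2 x 1) y = 0) (k : ℤ) :
    ∃ D : lp (fun _ : X => ℂ) 2 →L[ℂ] lp (fun _ : X => ℂ) 2,
      (∀ x y, D (lp.single 2 x 1) y = if w y - w x = k then A (lp.single 2 x 1) y else 0) ∧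
        ‖D‖ ≤ ‖A‖ := by
  obtain ⟨D, hD, hD_norm⟩ := exists_diagonal_mod w (N := R + k.natAbs + 1) (by omega) k A
  refine ⟨D, fun x y => ?_, hD_norm⟩
  rw [hD]
  by_cases hm : |w y - w x| ≤ R
  · have hlt : |w y - w x - k| < (R + k.natAbs + 1 : ℕ) := by
      rw [abs_le] at hm; rw [abs_lt]; omega
    refine if_congr ⟨fun h => sub_eq_zero.1 (Int.eq_zero_of_abs_lt_dvd h hlt), fun h => ?_⟩ rfl rfl
    rw [h, sub_self]
    exact dvd_zero _
  · simp [hband x y (not_le.1 hm)]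

end

theorem band_operator_exponential_conjugation_general
    {X : Type*} [DecidableEq X]
    (w : X → ℤ) (R : ℕ)
    (A : lp (fun _ : X => ℂ) 2 →L[ℂ] lp (fun _ : X => ℂ) 2)
    (hband : ∀ x y : X, (R : ℤ) < |w x - w y| →
      (inner ℂ (A (lp.single 2 x 1)) (lp.single 2 y 1) : ℂ) = 0)
    (t : ℝ) (ht : 0 ≤ t) :
    ∃ At : lp (fun _ : X => ℂ) 2 →L[ℂ] lp (fun _ : X => ℂ) 2,
      (∀ x y : X,
        (inner ℂ (At (lp.single 2 x 1)) (lp.single 2 y 1) : ℂ) =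
          (Real.exp (t * ((w y : ℝ) - (w x : ℝ))) : ℂ) *
            (inner ℂ (A (lp.single 2 x 1)) (lp.single 2 y 1) : ℂ)) ∧
      ‖At‖ ≤ (2 * (R : ℝ) + 1) * Real.exp (t * R) * ‖A‖ := by
  have hband' : ∀ x y, (R : ℤ) < |w y - w x| → A (lp.single 2 x 1) y = 0 := fun x y h => by
    simpa [inner_single_one_right] using hband x y (abs_sub_comm (w y) (w x) ▸ h)
  choose D hD hD_norm using exists_diagonal_of_band w R A hband'
  refine ⟨∑ k ∈ Finset.Icc (-(R : ℤ)) R, (Real.exp (t * k) : ℂ) • D k, fun x y => ?_, ?_⟩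
  · rw [inner_single_one_right, inner_single_one_right, ← Complex.conj_ofReal, ← map_mul]
    congr 1
    simp only [sum_apply, smul_apply, lp.coeFn_sum, lp.coeFn_smul, Finset.sum_apply,
      Pi.smul_apply, smul_eq_mul, hD, mul_ite, mul_zero, Finset.sum_ite_eq]
    split_ifs with hm
    · push_cast
      ring
    · rw [Finset.mem_Icc, ← abs_le, not_le] at hm
      rw [hband' x y hm, mul_zero]
  · exact norm_sum_Icc_exp_smul_le R ht D hD_norm

/-- **Conjugating a band operator by an exponential weight.**
If `A` is a bounded operator on `ℓ²(X)` whose matrix coefficients vanish whenever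
`|w(x) - w(y)| > R`, then for every `t ≥ 0` there is a bounded operator `A_t` with matrix
coefficients `⟨A_t e_x, e_y⟩ = e^{t (w(y) - w(x))} ⟨A e_x, e_y⟩` and
`‖A_t‖ ≤ (2R+1) e^{tR} ‖A‖`. -/
theorem band_operator_exponential_conjugation
    {X : Type*} [Countable X] [DecidableEq X]
    (w : X → ℤ) (R : ℕ)
    (A : lp (fun _ : X => ℂ) 2 →L[ℂ] lp (fun _ : X => ℂ) 2)
    (hband : ∀ x y : X, (R : ℤ) < |w x - w y| →
      (inner ℂ (A (lp.single 2 x 1)) (lp.single 2 y 1) : ℂ) = 0)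
    (t : ℝ) (ht : 0 ≤ t) :
    ∃ At : lp (fun _ : X => ℂ) 2 →L[ℂ] lp (fun _ : X => ℂ) 2,
      (∀ x y : X,
        (inner ℂ (At (lp.single 2 x 1)) (lp.single 2 y 1) : ℂ) =
          (Real.exp (t * ((w y : ℝ) - (w x : ℝ))) : ℂ) *
            (inner ℂ (A (lp.single 2 x 1)) (lp.single 2 y 1) : ℂ)) ∧
      ‖At‖ ≤ (2 * (R : ℝ) + 1) * Real.exp (t * R) * ‖A‖ :=
  band_operator_exponential_conjugation_general w R A hband t ht
end
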